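/- For each n ≥ 1, the number of connected spanning subgraphs of the Schreier graph Γ_n of the Grigorchuk group is 2^{2^n + 4} · 3^{2^{n−1} − 1}. -/

import Mathlib

/-- A finite multigraph on a vertex set `V`: a finite edge type together with an
incidence map assigning to each edge its unordered pair of endpoints
(loops and parallel edges are allowed). -/
structure Multigraph (V : Type) where
  /-- the type of edges -/
  Edge : Type
  /-- the edge type is finite -/
  fintypeEdge : Fintype Edge
  /-- equality of edges is decidable -/
  decEqEdge : DecidableEq Edge
  /-- the unordered pair of endpoints of an edge -/
  inc : Edge → Sym2 V

attribute [instance] Multigraph.fintypeEdge Multigraph.decEqEdge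

namespace Multigraph

variable {V : Type} [Fintype V] [DecidableEq V]

/-- The simple graph underlying the spanning subgraph of `G` with edge set `A`:
two distinct vertices are adjacent iff some edge in `A` has them as endpoints. -/
def toSimple (G : Multigraph V) (A : Finset G.Edge) : SimpleGraph V :=
  SimpleGraph.fromRel fun u v => ∃ e ∈ A, G.inc e = s(u, v)

/-- `G.comps A` is the number `k(A)` of connected components of the spanning
subgraph of `G` with edge set `A`. -/
noncomputable def comps (G : Multigraph V) (A : Finset G.Edge) : ℕ :=
  Nat.card (G.toSimple A).ConnectedComponent

/-- The rank `r(A) = |V| - k(A)` of the spanning subgraph with edge set `A`. -/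
noncomputable def rk (G : Multigraph V) (A : Finset G.Edge) : ℕ :=
  Fintype.card V - G.comps A

/-- The nullity `n(A) = |E(A)| - r(A)` of the spanning subgraph with edge set `A`. -/
noncomputable def nullity (G : Multigraph V) (A : Finset G.Edge) : ℕ :=
  A.card - G.rk A

/-- The Tutte polynomial
`T(G; x, y) = ∑_{A ⊆ E} (x - 1) ^ (r(E) - r(A)) * (y - 1) ^ n(A)`,
as a function of two real variables. -/
noncomputable def tutte (G : Multigraph V) (x y : ℝ) : ℝ :=
  ∑ A ∈ (Finset.univ : Finset G.Edge).powerset,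
    (x - 1) ^ (G.rk Finset.univ - G.rk A) * (y - 1) ^ (G.nullity A)

/-- The reliability polynomial `R(G, p)`: the probability that, when each edge is
independently active with probability `p`, every pair of vertices is joined by a
path of active edges (i.e. the spanning subgraph of active edges is connected). -/
noncomputable def reliability (G : Multigraph V) (p : ℝ) : ℝ :=
  ∑ A ∈ (Finset.univ : Finset G.Edge).powerset,
    if G.comps A = 1 then p ^ A.card * (1 - p) ^ (Fintype.card G.Edge - A.card) else 0

/-- The complexity `τ(G)`: the number of spanning subtrees of `G`, i.e. spanning
subgraphs which are connected and have `|V| - 1` edges. -/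
noncomputable def treeCount (G : Multigraph V) : ℕ :=
  Nat.card {A : Finset G.Edge // G.comps A = 1 ∧ A.card + 1 = Fintype.card V}

/-- The number of connected spanning subgraphs of `G`. -/
noncomputable def connCount (G : Multigraph V) : ℕ :=
  Nat.card {A : Finset G.Edge // G.comps A = 1}

/-- The number of spanning forests of `G`: spanning subgraphs containing no cycle,
i.e. with `|E(A)| = |V| - k(A)` (zero nullity). -/
noncomputable def forestCount (G : Multigraph V) : ℕ :=
  Nat.card {A : Finset G.Edge // A.card + G.comps A = Fintype.card V}

/-- `σ` is an orientation of `G` if it assigns to every edge an ordered pair of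
vertices whose underlying unordered pair is the pair of endpoints of the edge. -/
def IsOrientation (G : Multigraph V) (σ : G.Edge → V × V) : Prop :=
  ∀ e, s((σ e).1, (σ e).2) = G.inc e

/-- The number of acyclic orientations of `G`: orientations admitting no directed
cycle. -/
noncomputable def acyclicOrientationCount (G : Multigraph V) : ℕ :=
  Nat.card {σ : G.Edge → V × V //
    G.IsOrientation σ ∧ ∀ v : V, ¬ Relation.TransGen (fun u w => ∃ e, σ e = (u, w)) v v}

/-- A proper coloring of `G`: the two endpoints of every edge receive distinct
colors. -/
def ProperColoring (G : Multigraph V) {α : Type} (c : V → α) : Prop :=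
  ∀ e, ¬ (Sym2.map c (G.inc e)).IsDiag

/-- The number of proper colorings of `G` with `k` colors (the value `χ(G, k)` of
the chromatic polynomial at the natural number `k`). -/
noncomputable def chromCount (G : Multigraph V) (k : ℕ) : ℕ :=
  Nat.card {c : V → Fin k // G.ProperColoring c}

end Multigraph

/-- The left endpoint of the `i`-th gap of a path on `2^n` vertices. -/
def leftV (n : ℕ) (i : Fin (2 ^ n - 1)) : Fin (2 ^ n) :=
  ⟨i.val, by have := i.isLt; omega⟩

/-- The right endpoint of the `i`-th gap of a path on `2^n` vertices. -/
def rightV (n : ℕ) (i : Fin (2 ^ n - 1)) : Fin (2 ^ n) :=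
  ⟨i.val + 1, by have := i.isLt; omega⟩

/-- The vertex carrying the `j`-th extra loop: the two outermost vertices carry
two extra loops each. -/
def endV (n : ℕ) (j : Fin 4) : Fin (2 ^ n) :=
  if j.val < 2 then ⟨0, by positivity⟩
  else
    ⟨2 ^ n - 1, by
      have h : 0 < 2 ^ n := by positivity
      omega⟩

/-- The level-`n` Schreier graph `Γ_n` of the Grigorchuk group, as an unlabelled
multigraph: the path-shaped cactus on `2^n` vertices obtained by alternating
`2^(n-1)` bridges (single edges, at even gaps) and `2^(n-1) - 1` cycles of length
two (double edges, at odd gaps), with one loop at every vertex and two extra loops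
at each of the two outermost vertices (which therefore carry three loops each). -/
def grig (n : ℕ) : Multigraph (Fin (2 ^ n)) where
  Edge := (Σ i : Fin (2 ^ n - 1), Fin (if Even i.val then 1 else 2)) ⊕ (Fin (2 ^ n) ⊕ Fin 4)
  fintypeEdge := inferInstance
  decEqEdge := inferInstance
  inc := fun e =>
    match e with
    | Sum.inl ⟨i, _⟩ => s(leftV n i, rightV n i)
    | Sum.inr (Sum.inl v) => s(v, v)
    | Sum.inr (Sum.inr j) => s(endV n j, endV n j)

/-!
A spanning subgraph of `Γ_n` is connected exactly when it contains, at every gap of the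
underlying path, at least one of the edges joining the two neighbouring vertices: its simple
graph is always a subgraph of the path graph, and a connected subgraph of a path must be the
whole path. Loops never matter, so they contribute a free factor `2 ^ (2 ^ n + 4)`, while a gap
with `k` parallel edges admits `2 ^ k - 1` choices: `1` at the `2 ^ (n - 1)` bridges and `3` at
the `2 ^ (n - 1) - 1` double edges.
-/

theorem Finset.prod_range_ite_even {M : Type*} [CommMonoid M] (a b : M) (m : ℕ) :
    ∏ k ∈ range m, (if Even k then a else b) = a ^ ((m + 1) / 2) * b ^ (m / 2) := by
  induction m with
  | zero => simp
  | succ m ih =>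
    rw [prod_range_succ, ih]
    rcases Nat.even_or_odd m with ⟨r, rfl⟩ | ⟨r, rfl⟩
    · rw [if_pos ⟨r, rfl⟩, show (r + r + 1 + 1) / 2 = r + 1 by omega,
        show (r + r + 1) / 2 = r by omega, show (r + r) / 2 = r by omega, pow_succ]
      ac_rfl
    · rw [if_neg (Nat.not_even_iff_odd.mpr ⟨r, rfl⟩),
        show (2 * r + 1 + 1 + 1) / 2 = r + 1 by omega, show (2 * r + 1 + 1) / 2 = r + 1 by omega,
        show (2 * r + 1) / 2 = r by omega, pow_succ b]
      ac_rfl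

theorem Finset.card_subtype_nonempty (α : Type*) [Fintype α] :
    Nat.card {s : Finset α // s.Nonempty} = 2 ^ Fintype.card α - 1 := by
  classical
  simp_rw [Nat.card_eq_fintype_card, nonempty_iff_ne_empty, Fintype.card_subtype_compl,
    Fintype.card_finset, Fintype.card_subtype_eq]

noncomputable def Finset.sigmaEquivPi {ι : Type*} {κ : ι → Type*} [Fintype ι] :
    Finset (Σ i, κ i) ≃ ∀ i, Finset (κ i) where
  toFun s i := s.preimage (Sigma.mk i) sigma_mk_injective.injOn
  invFun t := univ.sigma t
  left_inv s := by ext ⟨i, j⟩; simp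
  right_inv t := by funext i; ext j; simp

open Finset in
theorem card_finset_meeting_each_fiber {ι β : Type*} {κ : ι → Type*} [Fintype ι]
    [∀ i, Fintype (κ i)] [Fintype β] :
    Nat.card {A : Finset ((Σ i, κ i) ⊕ β) // ∀ i, ∃ j, Sum.inl ⟨i, j⟩ ∈ A} =
      (∏ i, (2 ^ Fintype.card (κ i) - 1)) * 2 ^ Fintype.card β := by
  have e₁ : {A : Finset ((Σ i, κ i) ⊕ β) // ∀ i, ∃ j, Sum.inl ⟨i, j⟩ ∈ A} ≃
      {s : Finset (Σ i, κ i) // ∀ i, ∃ j, ⟨i, j⟩ ∈ s} × Finset β :=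
    (sumEquiv.toEquiv.subtypeEquiv (q := fun st => ∀ i, ∃ j, ⟨i, j⟩ ∈ st.1)
      fun A => by simp [sumEquiv]).trans
      (Equiv.prodSubtypeFstEquivSubtypeProd (p := fun s : Finset (Σ i, κ i) =>
        ∀ i, ∃ j, ⟨i, j⟩ ∈ s))
  have e₂ : {s : Finset (Σ i, κ i) // ∀ i, ∃ j, ⟨i, j⟩ ∈ s} ≃
      ∀ i, {t : Finset (κ i) // t.Nonempty} :=
    (sigmaEquivPi.subtypeEquiv fun s => by simp [sigmaEquivPi, Finset.Nonempty]).trans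
      Equiv.subtypePiEquivPi
  rw [Nat.card_congr e₁, Nat.card_prod, Nat.card_congr e₂, Nat.card_pi,
    Nat.card_eq_fintype_card (α := Finset β), Fintype.card_finset]
  simp_rw [card_subtype_nonempty]

namespace SimpleGraph

theorem card_connectedComponent_eq_one_iff {V : Type*} (G : SimpleGraph V) :
    Nat.card G.ConnectedComponent = 1 ↔ G.Connected := by
  rw [Nat.card_eq_one_iff_unique, connected_iff]
  refine and_congr ⟨fun _ u v => ConnectedComponent.exact (Subsingleton.elim _ _),
    Preconnected.subsingleton_connectedComponent⟩ ?_
  exact ⟨fun ⟨c⟩ => ⟨c.out⟩, fun ⟨v⟩ => ⟨G.connectedComponentMk v⟩⟩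

theorem eq_pathGraph_of_le_of_connected {m : ℕ} {G : SimpleGraph (Fin m)}
    (hle : G ≤ pathGraph m) (hG : G.Connected) : G = pathGraph m := by
  refine le_antisymm hle fun u v huv => ?_
  wlog h : u.val + 1 = v.val generalizing u v
  · exact (this v u huv.symm ((pathGraph_adj.mp huv).resolve_left h)).symm
  obtain ⟨p⟩ := hG.preconnected u v
  -- a walk from `u` to `u + 1` crosses the cut `{w ≤ u}`, and only the edge `u — u + 1` does
  obtain ⟨d, -, hd₁, hd₂⟩ := p.exists_boundary_dart {w | w ≤ u} (show u ≤ u from le_rfl)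
    (show ¬ v ≤ u by rw [Fin.le_iff_val_le_val]; omega)
  simp only [Set.mem_ofPred_eq, Fin.le_iff_val_le_val, not_le] at hd₁ hd₂
  have hd := pathGraph_adj.mp (hle d.adj)
  obtain rfl : d.fst = u := Fin.ext (by omega)
  obtain rfl : d.snd = v := Fin.ext (by omega)
  exact d.adj

end SimpleGraph

namespace Multigraph

variable {V : Type} (G : Multigraph V) (A : Finset G.Edge)

theorem comps_eq_one_iff : G.comps A = 1 ↔ (G.toSimple A).Connected :=
  SimpleGraph.card_connectedComponent_eq_one_iff _

theorem toSimple_adj {u v : V} :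
    (G.toSimple A).Adj u v ↔ u ≠ v ∧ ∃ e ∈ A, G.inc e = s(u, v) := by
  simp [toSimple, SimpleGraph.fromRel_adj, Sym2.eq_swap]

end Multigraph

section Grigorchuk

open SimpleGraph

variable (n : ℕ) (A : Finset (grig n).Edge)

theorem grig_toSimple_adj {u v : Fin (2 ^ n)} :
    ((grig n).toSimple A).Adj u v ↔
      ∃ i j, Sum.inl ⟨i, j⟩ ∈ A ∧ s(leftV n i, rightV n i) = s(u, v) := by
  rw [Multigraph.toSimple_adj]
  constructor
  · rintro ⟨huv, ⟨i, j⟩ | w | j, he, hinc⟩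
    · exact ⟨i, j, he, hinc⟩
    all_goals exact absurd (Sym2.mk_isDiag_iff.mp (hinc ▸ Sym2.mk_isDiag_iff.mpr rfl)) huv
  · rintro ⟨i, j, he, hinc⟩
    refine ⟨fun huv => ?_, _, he, hinc⟩
    subst huv
    have := Sym2.mk_isDiag_iff.mp (hinc ▸ Sym2.mk_isDiag_iff.mpr rfl)
    simp [leftV, rightV, Fin.ext_iff] at this

theorem grig_toSimple_le_pathGraph : (grig n).toSimple A ≤ pathGraph (2 ^ n) := by
  intro u v huv
  obtain ⟨i, -, -, hinc⟩ := (grig_toSimple_adj n A).mp huv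
  rcases Sym2.eq_iff.mp hinc with ⟨rfl, rfl⟩ | ⟨rfl, rfl⟩ <;>
    simp [pathGraph_adj, leftV, rightV]

theorem grig_toSimple_adj_leftV_rightV {i : Fin (2 ^ n - 1)} :
    ((grig n).toSimple A).Adj (leftV n i) (rightV n i) ↔
      ∃ j, (Sum.inl ⟨i, j⟩ : (grig n).Edge) ∈ A := by
  rw [grig_toSimple_adj]
  refine ⟨fun ⟨i', j, he, hinc⟩ => ?_, fun ⟨j, he⟩ => ⟨i, j, he, rfl⟩⟩
  obtain rfl : i' = i := by
    simp only [Sym2.eq_iff, leftV, rightV, Fin.ext_iff] at hinc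
    omega
  exact ⟨j, he⟩

theorem pathGraph_le_grig_toSimple_iff :
    pathGraph (2 ^ n) ≤ (grig n).toSimple A ↔
      ∀ i, ∃ j, (Sum.inl ⟨i, j⟩ : (grig n).Edge) ∈ A := by
  refine ⟨fun h i => (grig_toSimple_adj_leftV_rightV n A).mp
    (h (pathGraph_adj.mpr (Or.inl rfl))), fun h u v huv => ?_⟩
  wlog huv' : u.val + 1 = v.val generalizing u v
  · exact (this v u huv.symm ((pathGraph_adj.mp huv).resolve_left huv')).symm
  have hu : u.val < 2 ^ n - 1 := by omega
  rw [show v = rightV n ⟨u, hu⟩ from Fin.ext huv'.symm]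
  exact (grig_toSimple_adj_leftV_rightV n A (i := ⟨u, hu⟩)).mpr (h _)

theorem grig_comps_eq_one_iff :
    (grig n).comps A = 1 ↔ ∀ i, ∃ j, (Sum.inl ⟨i, j⟩ : (grig n).Edge) ∈ A := by
  rw [Multigraph.comps_eq_one_iff, ← pathGraph_le_grig_toSimple_iff]
  refine ⟨fun h => (eq_pathGraph_of_le_of_connected (grig_toSimple_le_pathGraph n A) h).ge,
    fun h => ?_⟩
  exact (connected_iff _).mpr ⟨(pathGraph_preconnected _).mono h, ⟨⟨0, by positivity⟩⟩⟩

end Grigorchuk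

theorem connCount_grig_general (n : ℕ) :
    (grig n).connCount = 2 ^ (2 ^ n + 4) * 3 ^ (2 ^ (n - 1) - 1) := by
  have hodd : (2 ^ n - 1) / 2 = 2 ^ (n - 1) - 1 := by
    cases n with
    | zero => rfl
    | succ k => rw [Nat.add_sub_cancel, pow_succ]; omega
  have hgaps : ∏ i : Fin (2 ^ n - 1), (2 ^ Fintype.card (Fin (if Even i.val then 1 else 2)) - 1)
      = 3 ^ (2 ^ (n - 1) - 1) := by
    simp_rw [Fintype.card_fin, apply_ite (fun k => 2 ^ k - 1)]
    rw [Fin.prod_univ_eq_prod_range (fun k => if Even k then 2 ^ 1 - 1 else 2 ^ 2 - 1),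
      Finset.prod_range_ite_even, hodd]
    norm_num
  rw [Multigraph.connCount, Nat.card_congr (Equiv.subtypeEquivRight (grig_comps_eq_one_iff n))]
  refine (card_finset_meeting_each_fiber (β := Fin (2 ^ n) ⊕ Fin 4)
    (κ := fun i : Fin (2 ^ n - 1) => Fin (if Even i.val then 1 else 2))).trans ?_
  rw [hgaps]
  simp [mul_comm]

/-- For each `n ≥ 1`, the number of connected spanning subgraphs
of the Schreier graph `Γ_n` of the Grigorchuk group is
`2^(2^n + 4) · 3^(2^(n-1) - 1)`. -/
theorem connCount_grig (n : ℕ) (hn : 1 ≤ n) :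
    (grig n).connCount = 2 ^ (2 ^ n + 4) * 3 ^ (2 ^ (n - 1) - 1) :=
  connCount_grig_general n
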